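/- Let M be an optimal GK-model in which all instances of φ → □◇φ and ◇□φ → φ are valid. Then S is symmetric: S(x,y) = S(y,x) for all x,y. (Indeed S_□(x,y) ≤ S_◇(y,x) and S_◇(y,x) ≤ S_□(x,y), so S_◇(x,y) = S_□(y,x).) -/

import Mathlib

open scoped Classical

noncomputable def gimp (a b : ℝ) : ℝ := if a ≤ b then 1 else b

inductive GForm : Type where
  | bot : GForm
  | var : ℕ → GForm
  | and : GForm → GForm → GForm
  | or : GForm → GForm → GForm
  | imp : GForm → GForm → GForm
  | box : GForm → GForm
  | dia : GForm → GForm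

def GForm.neg (φ : GForm) : GForm := φ.imp .bot

noncomputable def ev {W : Type} (S : W → W → ℝ) (e : ℕ → W → ℝ) : GForm → W → ℝ
  | .bot, _ => 0
  | .var p, x => e p x
  | .and φ ψ, x => min (ev S e φ x) (ev S e ψ x)
  | .or φ ψ, x => max (ev S e φ x) (ev S e ψ x)
  | .imp φ ψ, x => gimp (ev S e φ x) (ev S e ψ x)
  | .box φ, x => ⨅ y, gimp (S x y) (ev S e φ y)
  | .dia φ, x => ⨆ y, min (S x y) (ev S e φ y)

noncomputable def Splus {W : Type} (S : W → W → ℝ) (e : ℕ → W → ℝ) (x y : W) : ℝ :=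
  min (⨅ φ : GForm, gimp (ev S e (.box φ) x) (ev S e φ y))
      (⨅ φ : GForm, gimp (ev S e φ y) (ev S e (.dia φ) x))

/-! The axiom instances give `φ ≤ □◇φ` and `◇□φ ≤ φ` pointwise. Testing the infimum defining
`S_□(x,y)` at `◇φ` then yields `S_□(x,y) ≤ S_◇(y,x)`, and testing the one defining `S_◇(x,y)` at
`□φ` yields `S_◇(x,y) ≤ S_□(y,x)`. Hence `S(x,y) ≤ S(y,x)` by optimality, and symmetry follows by
exchanging `x` and `y`. -/

instance : Nonempty GForm := ⟨.bot⟩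

lemma gimp_le_gimp {a₁ a₂ b₁ b₂ : ℝ} (hb₁ : b₁ ≤ 1) (ha : a₂ ≤ a₁) (hb : b₁ ≤ b₂) :
    gimp a₁ b₁ ≤ gimp a₂ b₂ := by
  unfold gimp
  split_ifs with h₁ h₂ h₂
  · exact le_rfl
  · exact absurd ((ha.trans h₁).trans hb) h₂
  · exact hb₁
  · exact hb

lemma le_of_gimp_eq_one {a b : ℝ} (ha : a ≤ 1) (h : gimp a b = 1) : a ≤ b := by
  unfold gimp at h
  split_ifs at h with hab
  · exact hab
  · exact h ▸ ha

lemma gimp_nonneg {a b : ℝ} (hb : 0 ≤ b) : 0 ≤ gimp a b := by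
  unfold gimp
  split_ifs
  exacts [zero_le_one, hb]

lemma gimp_mem_Icc {a b : ℝ} (hb : b ∈ Set.Icc (0:ℝ) 1) : gimp a b ∈ Set.Icc (0:ℝ) 1 :=
  ⟨gimp_nonneg hb.1, by unfold gimp; split_ifs; exacts [le_rfl, hb.2]⟩

lemma bddBelow_range_gimp {ι : Type*} {a b : ι → ℝ} (hb : ∀ i, 0 ≤ b i) :
    BddBelow (Set.range fun i => gimp (a i) (b i)) :=
  ⟨0, by rintro _ ⟨i, rfl⟩; exact gimp_nonneg (hb i)⟩

section Model

variable {W : Type} (S : W → W → ℝ) (e : ℕ → W → ℝ)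

lemma ev_mem_Icc [Nonempty W] (hS : ∀ x y, S x y ∈ Set.Icc (0:ℝ) 1)
    (he : ∀ p x, e p x ∈ Set.Icc (0:ℝ) 1) (φ : GForm) (x : W) :
    ev S e φ x ∈ Set.Icc (0:ℝ) 1 := by
  induction φ generalizing x with
  | bot => exact ⟨le_rfl, zero_le_one⟩
  | var p => exact he p x
  | and φ ψ ihφ ihψ => exact ⟨le_min (ihφ x).1 (ihψ x).1, min_le_of_left_le (ihφ x).2⟩
  | or φ ψ ihφ ihψ => exact ⟨le_max_of_le_left (ihφ x).1, max_le (ihφ x).2 (ihψ x).2⟩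
  | imp φ ψ _ ihψ => exact gimp_mem_Icc (ihψ x)
  | box φ ih =>
      have hbdd := bddBelow_range_gimp (a := S x) fun y => (ih y).1
      exact ⟨le_ciInf fun y => (gimp_mem_Icc (ih y)).1,
        (ciInf_le hbdd (Classical.arbitrary W)).trans (gimp_mem_Icc (ih _)).2⟩
  | dia φ ih =>
      have hbdd : BddAbove (Set.range fun y => min (S x y) (ev S e φ y)) := by
        refine ⟨1, ?_⟩
        rintro _ ⟨y, rfl⟩
        exact min_le_of_right_le (ih y).2
      exact ⟨le_ciSup_of_le hbdd (Classical.arbitrary W) (le_min (hS x _).1 (ih _).1),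
        ciSup_le fun y => min_le_of_right_le (ih y).2⟩

noncomputable def Sbox (x y : W) : ℝ := ⨅ φ : GForm, gimp (ev S e (.box φ) x) (ev S e φ y)

noncomputable def Sdia (x y : W) : ℝ := ⨅ φ : GForm, gimp (ev S e φ y) (ev S e (.dia φ) x)

lemma Splus_eq_min_Sbox_Sdia (x y : W) : Splus S e x y = min (Sbox S e x y) (Sdia S e x y) :=
  rfl

variable {S e}

lemma Sbox_le_Sdia_swap (hev : ∀ φ x, ev S e φ x ∈ Set.Icc (0:ℝ) 1)
    (hB : ∀ φ x, ev S e φ x ≤ ev S e (.box (.dia φ)) x) (x y : W) :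
    Sbox S e x y ≤ Sdia S e y x :=
  le_ciInf fun φ =>
    ciInf_le_of_le (bddBelow_range_gimp fun ψ => (hev ψ y).1) (.dia φ)
      (gimp_le_gimp (hev _ y).2 (hB φ x) le_rfl)

lemma Sdia_le_Sbox_swap (hev : ∀ φ x, ev S e φ x ∈ Set.Icc (0:ℝ) 1)
    (hT : ∀ φ x, ev S e (.dia (.box φ)) x ≤ ev S e φ x) (x y : W) :
    Sdia S e x y ≤ Sbox S e y x :=
  le_ciInf fun φ =>
    ciInf_le_of_le (bddBelow_range_gimp fun ψ => (hev (.dia ψ) x).1) (.box φ)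
      (gimp_le_gimp (hev _ x).2 le_rfl (hT φ x))

lemma Splus_le_Splus_swap (hev : ∀ φ x, ev S e φ x ∈ Set.Icc (0:ℝ) 1)
    (hB : ∀ φ x, ev S e φ x ≤ ev S e (.box (.dia φ)) x)
    (hT : ∀ φ x, ev S e (.dia (.box φ)) x ≤ ev S e φ x) (x y : W) :
    Splus S e x y ≤ Splus S e y x := by
  simp only [Splus_eq_min_Sbox_Sdia]
  exact le_min ((min_le_right _ _).trans (Sdia_le_Sbox_swap hev hT x y))
    ((min_le_left _ _).trans (Sbox_le_Sdia_swap hev hB x y))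

end Model

theorem stmt13 (W : Type) [Nonempty W] (S : W → W → ℝ) (e : ℕ → W → ℝ)
    (hS : ∀ x y, S x y ∈ Set.Icc (0:ℝ) 1) (he : ∀ p x, e p x ∈ Set.Icc (0:ℝ) 1)
    (hopt : ∀ x y, S x y = Splus S e x y)
    (hM : ∀ (φ : GForm) (x : W), ev S e (.imp φ (.box (.dia φ))) x = 1 ∧
      ev S e (.imp (.dia (.box φ)) φ) x = 1) :
    ∀ x y, S x y = S y x := by
  have hev := ev_mem_Icc S e hS he
  have hB : ∀ φ x, ev S e φ x ≤ ev S e (.box (.dia φ)) x :=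
    fun φ x => le_of_gimp_eq_one (hev φ x).2 (hM φ x).1
  have hT : ∀ φ x, ev S e (.dia (.box φ)) x ≤ ev S e φ x :=
    fun φ x => le_of_gimp_eq_one (hev _ x).2 (hM φ x).2
  have hle : ∀ x y, S x y ≤ S y x := fun x y => by
    simpa only [← hopt] using Splus_le_Splus_swap hev hB hT x y
  exact fun x y => (hle x y).antisymm (hle y x)
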